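/- Let G be a finite set of nonzero polynomials and let p be a nonzero polynomial admitting a representation p = Σ_k h_k g_k with g_k ∈ G. If for every index k with lm(h_k)·lm(g_k) > lm(p) there exists an index ℓ ≠ k with lm(h_k)·lm(g_k) = lm(h_ℓ)·lm(g_ℓ), and every S-polynomial of elements of G has a standard representation with respect to G, then p has a standard representation with respect to G. -/

import Mathlib

/-!
Regroup the representation as `p = ∑ q ∈ G, c q * q` and let `μ` be the largest leading monomial
among the summands `c q * q`. If `lm p ≺ μ`, the leading terms of the summands of degree `μ`
cancel, so their sum is a linear combination of S-polynomials of the products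
`leadingTerm (c q) * q`. Each of these is a monomial multiple of some `S(q, q')`, and the standard
representation of `S(q, q')` turns it into a combination whose summands lie strictly below `μ`.
The remaining tails `(c q - leadingTerm (c q)) * q` lie below `μ` as well, so `p` has a
representation with a smaller bound, and well-foundedness of the monomial order ends the descent.
-/

open scoped MonomialOrder

namespace F5

variable {σ K : Type*} [Field K] (mo : MonomialOrder σ)

/-- leading monomial (exponent) of a polynomial w.r.t. a monomial order -/
noncomputable def lm (p : MvPolynomial σ K) : σ →₀ ℕ :=
  mo.toSyn.symm (p.support.sup fun d => mo.toSyn d)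

/-- leading coefficient -/
noncomputable def lc (p : MvPolynomial σ K) : K := p.coeff (lm mo p)

/-- S-polynomial -/
noncomputable def Spoly (p q : MvPolynomial σ K) : MvPolynomial σ K :=
  MvPolynomial.monomial ((lm mo p ⊔ lm mo q) - lm mo p) (lc mo q) * p -
    MvPolynomial.monomial ((lm mo p ⊔ lm mo q) - lm mo q) (lc mo p) * q

/-- standard representation of `p` w.r.t. the finite set `G` -/
def HasStdRep (G : Finset (MvPolynomial σ K)) (p : MvPolynomial σ K) : Prop :=
  p = 0 ∨ ∃ lam : MvPolynomial σ K → MvPolynomial σ K,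
    p = ∑ g ∈ G, lam g * g ∧
    ∀ g ∈ G, lam g * g ≠ 0 → lm mo (lam g * g) ≼[mo] lm mo p

open MvPolynomial MonomialOrder
open scoped Pointwise

variable {mo}

theorem spoly_eq_sPolynomial (p q : MvPolynomial σ K) : Spoly mo p q = mo.sPolynomial p q := by
  rw [sPolynomial_def]; rfl

theorem ne_zero_of_toSyn_lt {ν μ : σ →₀ ℕ} (h : ν ≺[mo] μ) : μ ≠ 0 := by
  rintro rfl
  exact (mo.zero_le _).not_gt (by simpa using h)

section CommSemiring

variable {R : Type*} [CommSemiring R]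

def supportedCombinations (G : Finset (MvPolynomial σ R)) (S : Set (σ →₀ ℕ)) :
    Submodule R (MvPolynomial σ R) where
  carrier := {f | ∃ c : MvPolynomial σ R → MvPolynomial σ R,
    f = ∑ q ∈ G, c q * q ∧ ∀ q ∈ G, c q * q ∈ restrictSupport R S}
  add_mem' := by
    rintro _ _ ⟨c, rfl, hc⟩ ⟨c', rfl, hc'⟩
    refine ⟨c + c', by simp [add_mul, Finset.sum_add_distrib], fun q hq => ?_⟩
    simpa [add_mul] using add_mem (hc q hq) (hc' q hq)
  zero_mem' := ⟨0, by simp, fun q _ => by simp⟩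
  smul_mem' := by
    rintro r _ ⟨c, rfl, hc⟩
    refine ⟨r • c, by simp [Finset.smul_sum], fun q hq => ?_⟩
    simpa [smul_mul_assoc] using Submodule.smul_mem _ r (hc q hq)

variable {G : Finset (MvPolynomial σ R)} {S T : Set (σ →₀ ℕ)}

theorem supportedCombinations_mono (h : S ⊆ T) :
    supportedCombinations G S ≤ supportedCombinations G T := by
  rintro _ ⟨c, rfl, hc⟩
  exact ⟨c, rfl, fun q hq => restrictSupport_mono R h (hc q hq)⟩

theorem supportedCombinations_le_restrictSupport :
    supportedCombinations G S ≤ restrictSupport R S := by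
  rintro _ ⟨c, rfl, hc⟩
  exact Submodule.sum_mem _ hc

theorem monomial_mul_mem_supportedCombinations {f : MvPolynomial σ R}
    (hf : f ∈ supportedCombinations G S) (a : σ →₀ ℕ) (r : R) :
    monomial a r * f ∈ supportedCombinations G (({a} : Set (σ →₀ ℕ)) + S) := by
  obtain ⟨c, rfl, hc⟩ := hf
  refine ⟨fun q => monomial a r * c q, by simp [Finset.mul_sum, mul_assoc], fun q hq => ?_⟩
  rw [restrictSupport_add, mul_assoc]
  exact Submodule.mul_mem_mul ((monomial_mem_restrictSupport R).mpr (Or.inl rfl)) (hc q hq)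

theorem mem_restrictSupport_le_iff {μ : σ →₀ ℕ} {p : MvPolynomial σ R} :
    p ∈ restrictSupport R {d | d ≼[mo] μ} ↔ mo.degree p ≼[mo] μ :=
  mo.degree_le_iff.symm

theorem mem_restrictSupport_lt_of_degree_lt {μ : σ →₀ ℕ} {p : MvPolynomial σ R}
    (h : mo.degree p ≺[mo] μ) : p ∈ restrictSupport R {d | d ≺[mo] μ} :=
  fun _ hd => (mo.le_degree hd).trans_lt h

theorem degree_lt_of_mem_restrictSupport_lt {μ : σ →₀ ℕ} (hμ : μ ≠ 0) {p : MvPolynomial σ R}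
    (hp : p ∈ restrictSupport R {d | d ≺[mo] μ}) : mo.degree p ≺[mo] μ :=
  (mo.degree_lt_iff (by simpa [toSyn_lt_iff_ne_zero] using hμ)).mpr hp

theorem exists_lt_mem_supportedCombinations_le {μ : σ →₀ ℕ} (hμ : μ ≠ 0) {f : MvPolynomial σ R}
    (hf : f ∈ supportedCombinations G {d | d ≺[mo] μ}) :
    ∃ ν, ν ≺[mo] μ ∧ f ∈ supportedCombinations G {d | d ≼[mo] ν} := by
  obtain ⟨c, rfl, hc⟩ := hf
  refine ⟨mo.toSyn.symm (G.sup fun q => mo.toSyn (mo.degree (c q * q))), ?_, c, rfl,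
    fun q hq => mem_restrictSupport_le_iff.mpr ?_⟩
  · rw [AddEquiv.apply_symm_apply, Finset.sup_lt_iff (by simpa [toSyn_lt_iff_ne_zero] using hμ)]
    exact fun q hq => degree_lt_of_mem_restrictSupport_lt hμ (hc q hq)
  · rw [AddEquiv.apply_symm_apply]
    exact Finset.le_sup (f := fun q => mo.toSyn (mo.degree (c q * q))) hq

theorem monomial_mul_mem_supportedCombinations_lt {γ : σ →₀ ℕ} {f : MvPolynomial σ R}
    (hf : f ∈ supportedCombinations G {d | d ≺[mo] γ}) (a : σ →₀ ℕ) (r : R) :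
    monomial a r * f ∈ supportedCombinations G {d | d ≺[mo] a + γ} := by
  refine supportedCombinations_mono ?_ (monomial_mul_mem_supportedCombinations hf a r)
  rintro _ ⟨_, rfl, d, hd, rfl⟩
  simpa [map_add] using hd

end CommSemiring

theorem sub_leadingTerm_mul_mem_restrictSupport {R : Type*} [CommRing R] [NoZeroDivisors R]
    (a q : MvPolynomial σ R) :
    (a - mo.leadingTerm a) * q ∈ restrictSupport R {d | d ≺[mo] mo.degree (a * q)} := by
  by_cases h0 : (a - mo.leadingTerm a) * q = 0
  · rw [h0]; exact zero_mem _
  obtain ⟨hr, hq⟩ := mul_ne_zero_iff.mp h0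
  refine mem_restrictSupport_lt_of_degree_lt ?_
  rw [mo.degree_mul_lt_iff_left_lt_of_ne_zero hr hq]
  exact mo.degree_sub_leadingTerm_lt_degree (mo.degree_ne_zero_of_sub_leadingTerm_ne_zero hr)

variable {G : Finset (MvPolynomial σ K)}

theorem hasStdRep_iff {p : MvPolynomial σ K} :
    HasStdRep mo G p ↔ p ∈ supportedCombinations G {d | d ≼[mo] mo.degree p} := by
  constructor
  · rintro (rfl | ⟨c, hp, hc⟩)
    · exact zero_mem _
    refine ⟨c, hp, fun q hq => mem_restrictSupport_le_iff.mpr ?_⟩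
    by_cases h0 : c q * q = 0
    · simp [h0]
    · exact hc q hq h0
  · rintro ⟨c, hp, hc⟩
    exact Or.inr ⟨c, hp, fun q hq _ => mem_restrictSupport_le_iff.mp (hc q hq)⟩

theorem sPolynomial_mem_supportedCombinations {q q' : MvPolynomial σ K}
    (h : HasStdRep mo G (Spoly mo q q')) :
    mo.sPolynomial q q' ∈
      supportedCombinations G {d | d ≺[mo] mo.degree q ⊔ mo.degree q'} := by
  rw [spoly_eq_sPolynomial, hasStdRep_iff] at h
  rcases eq_or_ne (mo.sPolynomial q q') 0 with h0 | h0
  · rw [h0]; exact zero_mem _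
  · exact supportedCombinations_mono
      (fun d hd => lt_of_le_of_lt hd (mo.degree_sPolynomial_lt_sup_degree h0)) h

theorem sum_leadingTerm_mul_mem_supportedCombinations
    (hspol : ∀ q ∈ G, ∀ q' ∈ G, HasStdRep mo G (Spoly mo q q'))
    {B : Finset (MvPolynomial σ K)} (hBG : B ⊆ G) {a : MvPolynomial σ K → MvPolynomial σ K}
    {μ : σ →₀ ℕ} (hB : ∀ q ∈ B, mo.degree (a q * q) = μ)
    (hsum : mo.degree (∑ q ∈ B, mo.leadingTerm (a q) * q) ≺[mo] μ) :
    ∑ q ∈ B, mo.leadingTerm (a q) * q ∈ supportedCombinations G {d | d ≺[mo] μ} := by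
  have hμ : μ ≠ 0 := ne_zero_of_toSyn_lt hsum
  have hle : ∀ q ∈ B, mo.degree q ≤ μ := by
    intro q hq
    have h0 : a q * q ≠ 0 := fun h0 => hμ (by rw [← hB q hq, h0, degree_zero])
    rw [← hB q hq, mo.degree_mul' h0]
    exact le_add_self
  obtain ⟨c, hc⟩ := mo.sPolynomial_decomposition' (fun q => mo.leadingTerm (a q) * q)
    (fun q hq => Or.inl (by rw [degree_leadingTerm_mul, hB q hq])) hsum
  rw [hc]
  refine Submodule.sum_mem _ fun q₁ hq₁ => Submodule.sum_mem _ fun q₂ hq₂ =>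
    Submodule.smul_mem _ _ ?_
  rw [sPolynomial_leadingTerm_mul', hB q₁ hq₁, hB q₂ hq₂, sup_idem]
  have := monomial_mul_mem_supportedCombinations_lt
    (sPolynomial_mem_supportedCombinations (hspol q₁ (hBG hq₁) q₂ (hBG hq₂)))
    (μ - mo.degree q₁ ⊔ mo.degree q₂) (mo.leadingCoeff (a q₁) * mo.leadingCoeff (a q₂))
  rwa [tsub_add_cancel_of_le (sup_le (hle q₁ hq₁) (hle q₂ hq₂))] at this

theorem mem_supportedCombinations_lt_of_degree_lt
    (hspol : ∀ q ∈ G, ∀ q' ∈ G, HasStdRep mo G (Spoly mo q q'))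
    {μ : σ →₀ ℕ} {f : MvPolynomial σ K} (hf : f ∈ supportedCombinations G {d | d ≼[mo] μ})
    (hdeg : mo.degree f ≺[mo] μ) : f ∈ supportedCombinations G {d | d ≺[mo] μ} := by
  classical
  obtain ⟨a, rfl, ha⟩ := hf
  set a' := fun q => a q - if mo.degree (a q * q) = μ then mo.leadingTerm (a q) else 0
  have hsplit : ∑ q ∈ G, a q * q = ∑ q ∈ G, a' q * q +
      ∑ q ∈ G with mo.degree (a q * q) = μ, mo.leadingTerm (a q) * q := by
    rw [Finset.sum_filter, ← Finset.sum_add_distrib]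
    refine Finset.sum_congr rfl fun q _ => ?_
    split_ifs with htop <;> simp [a', htop, sub_mul]
  have hrest : ∑ q ∈ G, a' q * q ∈ supportedCombinations G {d | d ≺[mo] μ} := by
    refine ⟨a', rfl, fun q hq => ?_⟩
    by_cases htop : mo.degree (a q * q) = μ
    · simpa [a', htop] using sub_leadingTerm_mul_mem_restrictSupport (mo := mo) (a q) q
    · rw [show a' q = a q by simp [a', htop]]
      exact mem_restrictSupport_lt_of_degree_lt (lt_of_le_of_ne
        (mem_restrictSupport_le_iff.mp (ha q hq)) (mo.toSyn.injective.ne htop))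
  have htop : ∑ q ∈ G with mo.degree (a q * q) = μ, mo.leadingTerm (a q) * q ∈
      supportedCombinations G {d | d ≺[mo] μ} := by
    refine sum_leadingTerm_mul_mem_supportedCombinations hspol (Finset.filter_subset _ _)
      (fun q hq => (Finset.mem_filter.mp hq).2) (degree_lt_of_mem_restrictSupport_lt
        (ne_zero_of_toSyn_lt hdeg) ?_)
    rw [eq_sub_of_add_eq' hsplit.symm]
    exact sub_mem (mem_restrictSupport_lt_of_degree_lt hdeg)
      (supportedCombinations_le_restrictSupport hrest)
  rw [hsplit]
  exact add_mem hrest htop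

theorem hasStdRep_of_mem_supportedCombinations
    (hspol : ∀ q ∈ G, ∀ q' ∈ G, HasStdRep mo G (Spoly mo q q')) (μ : σ →₀ ℕ) :
    ∀ f ∈ supportedCombinations G {d | d ≼[mo] μ}, HasStdRep mo G f := by
  induction μ using (InvImage.wf mo.toSyn wellFounded_lt).induction with
  | _ μ ih =>
  intro f hf
  rcases le_or_gt (mo.toSyn μ) (mo.toSyn (mo.degree f)) with hμ | hμ
  · exact hasStdRep_iff.mpr (supportedCombinations_mono (fun d hd => le_trans hd hμ) hf)
  · obtain ⟨ν, hν, hfν⟩ := exists_lt_mem_supportedCombinations_le (ne_zero_of_toSyn_lt hμ)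
      (mem_supportedCombinations_lt_of_degree_lt hspol hf hμ)
    exact ih ν hν f hfν

theorem hasStdRep_of_eq_sum (hspol : ∀ q ∈ G, ∀ q' ∈ G, HasStdRep mo G (Spoly mo q q'))
    {f : MvPolynomial σ K} (c : MvPolynomial σ K → MvPolynomial σ K)
    (hf : f = ∑ q ∈ G, c q * q) : HasStdRep mo G f :=
  hasStdRep_of_mem_supportedCombinations hspol
    (mo.toSyn.symm (G.sup fun q => mo.toSyn (mo.degree (c q * q)))) f
    ⟨c, hf, fun q hq => mem_restrictSupport_le_iff.mpr (by
      simpa using Finset.le_sup (f := fun q => mo.toSyn (mo.degree (c q * q))) hq)⟩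

theorem stdRep_of_cancelling_representation_general {n : ℕ} (mo : MonomialOrder (Fin n))
    {K : Type*} [Field K] {ι : Type*}
    (G : Finset (MvPolynomial (Fin n) K))
    (p : MvPolynomial (Fin n) K)
    (s : Finset ι) (h : ι → MvPolynomial (Fin n) K) (g : ι → MvPolynomial (Fin n) K)
    (hgG : ∀ k ∈ s, g k ∈ G)
    (hrep : p = ∑ k ∈ s, h k * g k)
    (hspol : ∀ q ∈ G, ∀ q' ∈ G, HasStdRep mo G (Spoly mo q q')) :
    HasStdRep mo G p := by
  classical
  refine hasStdRep_of_eq_sum hspol (fun q => ∑ k ∈ s with g k = q, h k) ?_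
  rw [hrep, ← Finset.sum_fiberwise_of_maps_to hgG]
  refine Finset.sum_congr rfl fun q _ => ?_
  rw [Finset.sum_mul]
  exact Finset.sum_congr rfl fun k hk => by rw [(Finset.mem_filter.mp hk).2]

/-- Cancellation-of-leading-terms rewriting: if `p = ∑_{k ∈ s} h k * g k` with each
`g k ∈ G`, every summand whose monomial `lm (h k) * lm (g k)` exceeds `lm p` is
cancelled by another summand with the same monomial, and every S-polynomial of
elements of `G` has a standard representation w.r.t. `G`, then `p` has a standard
representation w.r.t. `G`. -/
theorem stdRep_of_cancelling_representation {n : ℕ} (mo : MonomialOrder (Fin n))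
    {K : Type*} [Field K] {ι : Type*}
    (G : Finset (MvPolynomial (Fin n) K)) (hG0 : ∀ g ∈ G, g ≠ 0)
    (p : MvPolynomial (Fin n) K) (hp : p ≠ 0)
    (s : Finset ι) (h : ι → MvPolynomial (Fin n) K) (g : ι → MvPolynomial (Fin n) K)
    (hgG : ∀ k ∈ s, g k ∈ G)
    (hrep : p = ∑ k ∈ s, h k * g k)
    (hcancel : ∀ k ∈ s, h k ≠ 0 → (lm mo p ≺[mo] lm mo (h k) + lm mo (g k)) →
      ∃ l ∈ s, l ≠ k ∧ h l ≠ 0 ∧ lm mo (h l) + lm mo (g l) = lm mo (h k) + lm mo (g k))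
    (hspol : ∀ q ∈ G, ∀ q' ∈ G, HasStdRep mo G (Spoly mo q q')) :
    HasStdRep mo G p :=
  stdRep_of_cancelling_representation_general mo G p s h g hgG hrep hspol
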